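/- (Strong fundamental theorem of algebra for quaternionic polynomials) Let f be a regular quaternionic polynomial of degree n > 0 (f(w) = Σ_{i=0}^n wⁱaᵢ, aₙ ≠ 0). Then V(f) is non-empty; if α₁,…,α_k are representatives of the distinct conjugacy classes meeting V(f), then Σ_{j=1}^k m_f(αⱼ) = n, where m_f(α) is the largest s with Δ_α^s dividing N(f). In particular, if f has r real zeros, i isolated (non-real, non-spherical) zeros, and s spheres of spherical zeros, then r + i + 2s ≤ n. -/

import Mathlib

noncomputable section
open Polynomial
open scoped Classical

/-- The real quaternions. -/
abbrev Quat := Quaternion ℝ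

/-- Evaluation of a regular quaternionic polynomial `p` at `q`: `p(q) = Σᵢ qⁱ aᵢ`
(powers of the variable on the left of the right coefficients). -/
def pevP (p : Quat[X]) (q : Quat) : Quat := p.sum fun i a => q ^ i * a

/-- The conjugate polynomial (coefficientwise quaternionic conjugation). -/
def pconj (p : Quat[X]) : Quat[X] := p.sum fun i a => Polynomial.monomial i (star a)

/-- The normal (symmetrized) polynomial `N(p) = p * conj(p)`; note that polynomial
multiplication in `Quat[X]` is exactly the star product (`w` central). -/
def Np (p : Quat[X]) : Quat[X] := p * pconj p

/-- The conjugacy class of `α`: quaternions with the same trace and the same norm. -/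
def Sset (α : Quat) : Set Quat := {x | x + star x = α + star α ∧ ‖x‖ = ‖α‖}

/-- The characteristic polynomial of `α`: `Δ_α = X² - tr(α)·X + |α|²` (a polynomial
with real, hence central, coefficients). -/
def Δpoly (α : Quat) : Quat[X] :=
  X ^ 2 - Polynomial.C (α + star α) * X + Polynomial.C (algebraMap ℝ Quat (‖α‖ ^ 2))

/-!
`N(f) = f * conj f` has real coefficients and `N(f)(r) = |f(r)|² ≥ 0` on `ℝ`, so it is a real
polynomial `G` of degree `2n`, nonnegative on `ℝ`. By the product formula
`(p * q)(x) = p(x) q(p(x)⁻¹ x p(x))`, a quaternionic root `x` of `G` has a zero of `f` or of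
`conj f` in its class, and since `f` is affine (`X a + b`) on each class, a zero of `conj f`
reflects to a zero of `f`. Conversely a zero of `f` in the class of `α` makes `Δ_α` divide `G`:
for non-real `α` it is the minimal polynomial, for real `α` the root is double because `G ≥ 0`.
The `Δ_α` of distinct classes are coprime, so `G = ∏ Δ_{αⱼ}^{mⱼ} * H` where `H` has no
quaternionic root, hence (via `ℂ ⊆ ℍ`) is constant: `2n = 2 Σ mⱼ`. A spherical class forces
`Δ_α ∣ f`, hence `Δ_α² ∣ N(f)` and `m ≥ 2`, which gives `r + i + 2s ≤ n`.
-/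

lemma pevP_add (p q : Quat[X]) (x : Quat) : pevP (p + q) x = pevP p x + pevP q x :=
  sum_add_index p q _ (fun _ => by simp) fun _ _ _ => mul_add _ _ _

lemma pevP_monomial (i : ℕ) (a x : Quat) : pevP (monomial i a) x = x ^ i * a := by
  simp [pevP]

lemma pevP_C_mul_X_add_C (a b x : Quat) : pevP (C a * X + C b) x = x * a + b := by
  rw [pevP_add, C_mul_X_eq_monomial, ← monomial_zero_left, pevP_monomial, pevP_monomial,
    pow_one, pow_zero, one_mul]

lemma pevP_mul_monomial (p : Quat[X]) (j : ℕ) (b x : Quat) :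
    pevP (p * monomial j b) x = x ^ j * pevP p x * b := by
  induction p using Polynomial.induction_on' with
  | add p q hp hq => rw [add_mul, pevP_add, hp, hq, pevP_add, mul_add, add_mul]
  | monomial i a =>
    rw [monomial_mul_monomial, pevP_monomial, pevP_monomial, add_comm i j, pow_add]
    simp only [mul_assoc]

/-- The product formula; it also holds when `p x = 0`, both sides being `0`. -/
lemma pevP_mul (p q : Quat[X]) (x : Quat) :
    pevP (p * q) x = pevP p x * pevP q ((pevP p x)⁻¹ * x * pevP p x) := by
  induction q using Polynomial.induction_on' with
  | add q r hq hr => rw [mul_add, pevP_add, hq, hr, pevP_add, mul_add]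
  | monomial j b =>
    rw [pevP_mul_monomial, pevP_monomial]
    rcases eq_or_ne (pevP p x) 0 with hβ | hβ
    · rw [hβ, mul_zero, zero_mul, zero_mul]
    · rw [GroupWithZero.conj_pow₀ hβ]
      simp only [mul_assoc, mul_inv_cancel_left₀ hβ]

lemma pevP_mul_eq_zero_of_left {p : Quat[X]} {x : Quat} (q : Quat[X]) (h : pevP p x = 0) :
    pevP (p * q) x = 0 := by
  rw [pevP_mul, h, zero_mul]

lemma pevP_mul_of_commute {p : Quat[X]} {x : Quat} (q : Quat[X]) (h : Commute x (pevP p x)) :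
    pevP (p * q) x = pevP p x * pevP q x := by
  rw [pevP_mul]
  rcases eq_or_ne (pevP p x) 0 with h0 | h0
  · rw [h0, zero_mul, zero_mul]
  · rw [mul_assoc, h.eq, ← mul_assoc, inv_mul_cancel₀ h0, one_mul]

lemma pevP_map (P : ℝ[X]) (x : Quat) : pevP (P.map (algebraMap ℝ Quat)) x = aeval x P := by
  induction P using Polynomial.induction_on' with
  | add P Q hP hQ => rw [Polynomial.map_add, pevP_add, hP, hQ, map_add]
  | monomial n a => rw [map_monomial, pevP_monomial, aeval_monomial, Algebra.commutes]

lemma pevP_map_mul (P : ℝ[X]) (q : Quat[X]) (x : Quat) :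
    pevP (P.map (algebraMap ℝ Quat) * q) x = aeval x P * pevP q x := by
  have h : Commute x (pevP (P.map (algebraMap ℝ Quat)) x) := by
    simpa [pevP_map] using (Commute.all X P).map (aeval x)
  rw [pevP_mul_of_commute q h, pevP_map]

lemma coeff_pconj (p : Quat[X]) (k : ℕ) : (pconj p).coeff k = star (p.coeff k) := by
  simp only [pconj, Polynomial.sum_def, finsetSum_coeff, coeff_monomial, Finset.sum_ite_eq']
  split_ifs with hk
  · rfl
  · rw [notMem_support_iff.mp hk, star_zero]

lemma pconj_add (p q : Quat[X]) : pconj (p + q) = pconj p + pconj q := by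
  ext k : 1; simp [coeff_pconj]

lemma pconj_monomial (i : ℕ) (a : Quat) : pconj (monomial i a) = monomial i (star a) := by
  ext k : 1; simp only [coeff_pconj, coeff_monomial]; split_ifs <;> simp

lemma pconj_pconj (p : Quat[X]) : pconj (pconj p) = p := by
  ext k : 1; simp [coeff_pconj]

lemma pconj_mul (p q : Quat[X]) : pconj (p * q) = pconj q * pconj p := by
  ext k : 1
  rw [coeff_pconj, coeff_mul, coeff_mul, star_sum,
    ← Finset.HasAntidiagonal.map_swap_antidiagonal, Finset.sum_map]
  simp [coeff_pconj]

lemma pconj_map (P : ℝ[X]) :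
    pconj (P.map (algebraMap ℝ Quat)) = P.map (algebraMap ℝ Quat) := by
  ext k : 1; simp [coeff_pconj, Quaternion.algebraMap_def]

lemma pconj_eq_zero {p : Quat[X]} : pconj p = 0 ↔ p = 0 := by
  simp [Polynomial.ext_iff, coeff_pconj]

lemma support_pconj (p : Quat[X]) : (pconj p).support = p.support := by
  ext k; simp [coeff_pconj]

lemma natDegree_pconj (p : Quat[X]) : (pconj p).natDegree = p.natDegree := by
  simp only [natDegree, degree, support_pconj]

lemma commute_map_algebraMap (P : ℝ[X]) (q : Quat[X]) :
    Commute (P.map (algebraMap ℝ Quat)) q := by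
  induction P using Polynomial.induction_on' with
  | add P Q hP hQ => rw [Polynomial.map_add]; exact hP.add_left hQ
  | monomial n a =>
    rw [map_monomial, ← C_mul_X_pow_eq_monomial, ← Polynomial.algebraMap_apply]
    exact (Algebra.commute_algebraMap_left a q).mul_left (commute_X_pow q n)

lemma pconj_Np (p : Quat[X]) : pconj (Np p) = Np p := by
  rw [Np, pconj_mul, pconj_pconj]

lemma natDegree_Np {p : Quat[X]} (hp : p ≠ 0) : (Np p).natDegree = 2 * p.natDegree := by
  rw [Np, natDegree_mul hp (pconj_eq_zero.not.mpr hp), natDegree_pconj, two_mul]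

lemma Np_mem_lifts (p : Quat[X]) : Np p ∈ lifts (algebraMap ℝ Quat) := by
  refine (lifts_iff_coeff_lifts _).mpr fun k => ⟨((Np p).coeff k).re, ?_⟩
  have h : star ((Np p).coeff k) = (Np p).coeff k := by rw [← coeff_pconj, pconj_Np]
  rw [Quaternion.algebraMap_def, ← Quaternion.star_eq_self.mp h]

lemma pevP_pconj_algebraMap (p : Quat[X]) (r : ℝ) :
    pevP (pconj p) (algebraMap ℝ Quat r) = star (pevP p (algebraMap ℝ Quat r)) := by
  induction p using Polynomial.induction_on' with
  | add p q hp hq => rw [pconj_add, pevP_add, pevP_add, hp, hq, star_add]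
  | monomial i a =>
    rw [pconj_monomial, pevP_monomial, pevP_monomial, star_mul, ← map_pow,
      Quaternion.algebraMap_def, Quaternion.star_coe, (Quaternion.coe_commute _ _).eq]

lemma eval_nonneg_of_map_eq_Np {G : ℝ[X]} {f : Quat[X]}
    (hG : G.map (algebraMap ℝ Quat) = Np f) (r : ℝ) : 0 ≤ G.eval r := by
  have h : algebraMap ℝ Quat (G.eval r) = Quaternion.normSq (pevP f (algebraMap ℝ Quat r)) := by
    rw [← aeval_algebraMap_apply_eq_algebraMap_eval, ← pevP_map, hG, Np,
      pevP_mul_of_commute _ (Algebra.commute_algebraMap_left r _), pevP_pconj_algebraMap,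
      Quaternion.self_mul_star]
  rw [Quaternion.algebraMap_def, Quaternion.coe_inj] at h
  exact h ▸ Quaternion.normSq_nonneg

def Δreal (α : Quat) : ℝ[X] := X ^ 2 - C (2 * α.re) * X + C (‖α‖ ^ 2)

lemma Δpoly_eq_map (α : Quat) : Δpoly α = (Δreal α).map (algebraMap ℝ Quat) := by
  simp [Δpoly, Δreal, Quaternion.self_add_star', Quaternion.algebraMap_def]

lemma monic_Δreal (α : Quat) : (Δreal α).Monic := by
  unfold Δreal; monicity!

lemma monic_Δpoly (α : Quat) : (Δpoly α).Monic := Δpoly_eq_map α ▸ (monic_Δreal α).map _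

lemma natDegree_Δreal (α : Quat) : (Δreal α).natDegree = 2 := by
  unfold Δreal; compute_degree!

lemma mem_Sset_iff {x α : Quat} : x ∈ Sset α ↔ x.re = α.re ∧ ‖x‖ = ‖α‖ := by
  simp only [Sset, Set.mem_ofPred_eq, Quaternion.self_add_star', Quaternion.coe_inj,
    mul_eq_mul_left_iff, two_ne_zero, or_false]

lemma Δreal_eq_iff {x α : Quat} : Δreal x = Δreal α ↔ x ∈ Sset α := by
  rw [mem_Sset_iff]
  constructor
  · intro h
    have h1 := congrArg (coeff · 1) h
    have h0 := congrArg (coeff · 0) h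
    simp only [Δreal, coeff_add, coeff_sub, coeff_X_pow, coeff_C_mul_X, coeff_C] at h1 h0
    norm_num at h1 h0
    exact ⟨h1, by nlinarith [norm_nonneg x, norm_nonneg α]⟩
  · rintro ⟨h1, h2⟩
    rw [Δreal, Δreal, h1, h2]

lemma mem_Sset_self (α : Quat) : α ∈ Sset α := Δreal_eq_iff.mp rfl

lemma star_mem_Sset {x α : Quat} (h : x ∈ Sset α) : star x ∈ Sset α := by
  rw [mem_Sset_iff] at h ⊢
  rw [Quaternion.re_star, Quaternion.norm_star]
  exact h

lemma conj_mem_Sset {x α d : Quat} (h : x ∈ Sset α) (hd : d ≠ 0) :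
    d * x * d⁻¹ ∈ Sset α := by
  rw [mem_Sset_iff] at h ⊢
  have hre : ∀ a b : Quat, (a * b).re = (b * a).re := fun a b => by
    simp only [Quaternion.re_mul]; ring
  refine ⟨by rw [hre, ← mul_assoc, inv_mul_cancel₀ hd, one_mul, h.1], ?_⟩
  rw [norm_mul, norm_mul, norm_inv, mul_comm ‖d‖, mul_assoc,
    mul_inv_cancel₀ (norm_ne_zero_iff.mpr hd), mul_one, h.2]

lemma aeval_Δreal_self (x : Quat) : aeval x (Δreal x) = 0 := by
  have h1 : algebraMap ℝ Quat (2 * x.re) = x + star x := by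
    rw [Quaternion.algebraMap_def, Quaternion.self_add_star']
  have h2 : algebraMap ℝ Quat (‖x‖ ^ 2) = star x * x := by
    rw [Quaternion.algebraMap_def, Quaternion.star_mul_self, Quaternion.normSq_eq_norm_mul_self,
      sq]
  rw [Δreal, map_add, map_sub, map_mul, map_pow, aeval_X, aeval_C, aeval_C, h1, h2]
  noncomm_ring

lemma aeval_Δreal_of_mem {x α : Quat} (hx : x ∈ Sset α) : aeval x (Δreal α) = 0 := by
  rw [← Δreal_eq_iff.mpr hx, aeval_Δreal_self]

lemma im_eq_zero_iff_mem_range {x : Quat} : x.im = 0 ↔ x ∈ (algebraMap ℝ Quat).range := by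
  constructor
  · intro h
    exact ⟨x.re, by simpa [Quaternion.algebraMap_def, h] using Quaternion.re_add_im x⟩
  · rintro ⟨r, rfl⟩
    rw [Quaternion.algebraMap_def, Quaternion.im_coe]

lemma Δreal_of_im_eq_zero {α : Quat} (h : α.im = 0) : Δreal α = (X - C α.re) ^ 2 := by
  obtain ⟨r, rfl⟩ := im_eq_zero_iff_mem_range.mp h
  simp only [Δreal, Quaternion.algebraMap_def, Quaternion.re_coe, Quaternion.norm_coe,
    Real.norm_eq_abs, sq_abs, map_mul, map_pow, map_ofNat]
  ring

lemma minpoly_eq_Δreal {x : Quat} (h : x.im ≠ 0) : minpoly ℝ x = Δreal x := by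
  have hint : IsIntegral ℝ x := ⟨Δreal x, monic_Δreal x, aeval_Δreal_self x⟩
  refine (eq_of_monic_of_dvd_of_natDegree_le (minpoly.monic hint) (monic_Δreal x)
    (minpoly.dvd ℝ x (aeval_Δreal_self x)) ?_).symm
  rw [natDegree_Δreal, minpoly.two_le_natDegree_iff hint, ← im_eq_zero_iff_mem_range]
  exact h

lemma eval_Δreal_nonneg (α : Quat) (r : ℝ) : 0 ≤ (Δreal α).eval r := by
  have h : (Δreal α).eval r = (r - α.re) ^ 2 + (‖α‖ ^ 2 - α.re ^ 2) := by
    simp [Δreal]; ring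
  have hre : α.re ^ 2 ≤ ‖α‖ ^ 2 := by
    rw [sq, sq, ← Quaternion.normSq_eq_norm_mul_self, Quaternion.normSq_def']
    nlinarith [sq_nonneg α.imI, sq_nonneg α.imJ, sq_nonneg α.imK]
  rw [h]; nlinarith [sq_nonneg (r - α.re)]

lemma X_sub_C_sq_dvd_of_eval_nonneg {H : ℝ[X]} (hH : ∀ r, 0 ≤ H.eval r) {a : ℝ}
    (ha : H.IsRoot a) : (X - C a) ^ 2 ∣ H := by
  rcases eq_or_ne H 0 with rfl | h0
  · exact dvd_zero _
  have hmin : IsLocalMin (fun r => H.eval r) a :=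
    Filter.Eventually.of_forall fun r => by
      change H.eval a ≤ H.eval r
      rw [ha.eq_zero]
      exact hH r
  rw [← le_rootMultiplicity_iff h0]
  exact (one_lt_rootMultiplicity_iff_isRoot h0).mpr
    ⟨ha, by simpa [Polynomial.deriv] using hmin.deriv_eq_zero⟩

lemma eval_nonneg_of_eval_mul_nonneg {P H : ℝ[X]} (hP : P ≠ 0) (hP0 : ∀ r, 0 ≤ P.eval r)
    (hPH : ∀ r, 0 ≤ (P * H).eval r) (r : ℝ) : 0 ≤ H.eval r := by
  have hdense : Dense {x | P.IsRoot x}ᶜ :=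
    (finite_setOfPred_isRoot hP).countable.dense_compl ℝ
  have hsub : {x | P.IsRoot x}ᶜ ⊆ {x | 0 ≤ H.eval x} := fun x hx => by
    have := hPH x
    rw [eval_mul] at this
    exact nonneg_of_mul_nonneg_right this (lt_of_le_of_ne (hP0 x) (Ne.symm hx))
  have hclosed : IsClosed {x | 0 ≤ H.eval x} := isClosed_le continuous_const H.continuous
  exact hclosed.closure_subset_iff.mpr hsub (hdense.closure_eq ▸ Set.mem_univ r)

lemma exists_aeval_quat_eq_zero {H : ℝ[X]} (h : 0 < H.natDegree) :
    ∃ x : Quat, aeval x H = 0 := by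
  obtain ⟨z, hz⟩ :=
    IsAlgClosed.exists_aeval_eq_zero ℂ H (natDegree_pos_iff_degree_pos.mp h).ne'
  exact ⟨Quaternion.ofComplex z, by rw [aeval_algHom_apply, hz, map_zero]⟩

/-- For non-real `x`, `Δreal x` is the minimal polynomial of `x`; for real `x`, nonnegativity
makes the root double. -/
lemma Δreal_dvd_of_aeval_eq_zero {H : ℝ[X]} (hH : ∀ r, 0 ≤ H.eval r) {x : Quat}
    (hx : aeval x H = 0) : Δreal x ∣ H := by
  by_cases him : x.im = 0
  · obtain ⟨r, rfl⟩ := im_eq_zero_iff_mem_range.mp him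
    rw [Δreal_of_im_eq_zero him]
    refine X_sub_C_sq_dvd_of_eval_nonneg hH ?_
    rw [Quaternion.algebraMap_def, Quaternion.re_coe]
    apply Quaternion.algebraMap_injective
    rw [← aeval_algebraMap_apply_eq_algebraMap_eval, hx, map_zero]
  · rw [← minpoly_eq_Δreal him]
    exact minpoly.dvd ℝ x hx

lemma isCoprime_Δreal {α β : Quat} (h : β ∉ Sset α) : IsCoprime (Δreal α) (Δreal β) := by
  refine (isCoprime_iff_aeval_ne_zero_of_isAlgClosed ℝ ℂ _ _).mpr fun z => ?_
  by_contra! hz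
  have hy : ∀ γ, aeval z (Δreal γ) = 0 → Δreal γ = Δreal (Quaternion.ofComplex z) :=
    fun γ hγ => eq_of_monic_of_dvd_of_natDegree_le (monic_Δreal _) (monic_Δreal γ)
      (Δreal_dvd_of_aeval_eq_zero (eval_Δreal_nonneg γ)
        (by rw [aeval_algHom_apply, hγ, map_zero]))
      (by rw [natDegree_Δreal, natDegree_Δreal])
  exact h (Δreal_eq_iff.mp ((hy β hz.2).trans (hy α hz.1).symm))

lemma exists_eq_Δpoly_mul_add (f : Quat[X]) (α : Quat) :
    ∃ Q a b, f = Δpoly α * Q + (C a * X + C b) := by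
  have hdeg : (f %ₘ Δpoly α).natDegree ≤ 1 := by
    have h2 : (Δpoly α).natDegree = 2 := by
      rw [Δpoly_eq_map, natDegree_map_eq_of_injective Quaternion.algebraMap_injective,
        natDegree_Δreal]
    have := natDegree_modByMonic_lt f (monic_Δpoly α) fun h => by simp [h] at h2
    omega
  exact ⟨f /ₘ Δpoly α, _, _,
    by rw [← eq_X_add_C_of_natDegree_le_one hdeg, add_comm, modByMonic_add_div]⟩

lemma pevP_eq_of_mem_Sset {f Q : Quat[X]} {α a b x : Quat}
    (hf : f = Δpoly α * Q + (C a * X + C b)) (hx : x ∈ Sset α) : pevP f x = x * a + b := by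
  rw [hf, pevP_add, Δpoly_eq_map, pevP_map_mul, aeval_Δreal_of_mem hx, zero_mul, zero_add,
    pevP_C_mul_X_add_C]

lemma Δpoly_dvd_of_forall_mem_Sset {f : Quat[X]} {α : Quat} (hα : α.im ≠ 0)
    (h : ∀ x ∈ Sset α, pevP f x = 0) : Δpoly α ∣ f := by
  obtain ⟨Q, a, b, hf⟩ := exists_eq_Δpoly_mul_add f α
  have hroot : ∀ x ∈ Sset α, x * a + b = 0 := fun x hx =>
    (pevP_eq_of_mem_Sset hf hx).symm.trans (h x hx)
  have h1 := hroot α (mem_Sset_self α)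
  have h2 := hroot _ (star_mem_Sset (mem_Sset_self α))
  have hne : α - star α ≠ 0 := fun h0 =>
    hα (im_eq_zero_iff_mem_range.mpr ⟨α.re, by
      rw [Quaternion.algebraMap_def, ← Quaternion.star_eq_self.mp (sub_eq_zero.mp h0).symm]⟩)
  have ha : a = 0 := by
    refine (mul_eq_zero.mp ?_).resolve_left hne
    rw [sub_mul, ← add_sub_add_right_eq_sub _ _ b, h1, h2, sub_zero]
  have hb : b = 0 := by rwa [ha, mul_zero, zero_add] at h1
  exact ⟨Q, by rw [hf, ha, hb, map_zero, zero_mul, add_zero, add_zero]⟩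

lemma Δpoly_sq_dvd_Np {f : Quat[X]} {α : Quat} (hα : α.im ≠ 0)
    (h : ∀ x ∈ Sset α, pevP f x = 0) : Δpoly α ^ 2 ∣ Np f := by
  obtain ⟨Q, rfl⟩ := Δpoly_dvd_of_forall_mem_Sset hα h
  have hΔ : pconj (Δpoly α) = Δpoly α := by rw [Δpoly_eq_map, pconj_map]
  have hc : Commute (Δpoly α) (Q * pconj Q) := Δpoly_eq_map α ▸ commute_map_algebraMap _ _
  refine ⟨Q * pconj Q, ?_⟩
  rw [Np, pconj_mul, hΔ, sq, mul_assoc (Δpoly α) (Δpoly α), hc.eq]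
  simp only [mul_assoc]

/-- On `Sset α` we have `f = X a + b` and `conj f = X ā + b̄`, so the zero `γ` of `conj f`
gives the zero `a γ̄ a⁻¹` of `f`. -/
lemma exists_mem_Sset_of_pevP_pconj_eq_zero {f : Quat[X]} {α γ : Quat} (hγ : γ ∈ Sset α)
    (h : pevP (pconj f) γ = 0) : ∃ q ∈ Sset α, pevP f q = 0 := by
  obtain ⟨Q, a, b, hf⟩ := exists_eq_Δpoly_mul_add f α
  have hfc : pconj f = Δpoly α * pconj Q + (C (star a) * X + C (star b)) := by
    rw [hf, pconj_add, pconj_mul, Δpoly_eq_map, pconj_map, ← (commute_map_algebraMap _ _).eq,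
      pconj_add, C_mul_X_eq_monomial, C_mul_X_eq_monomial, ← monomial_zero_left,
      ← monomial_zero_left, pconj_monomial, pconj_monomial]
  have hab : a * star γ + b = 0 := by
    have := congrArg star ((pevP_eq_of_mem_Sset hfc hγ).symm.trans h)
    rwa [star_add, star_mul, star_star, star_star, star_zero] at this
  rcases eq_or_ne a 0 with rfl | ha
  · refine ⟨α, mem_Sset_self α, ?_⟩
    rw [pevP_eq_of_mem_Sset hf (mem_Sset_self α), mul_zero]
    simpa using hab
  · have hmem := conj_mem_Sset (star_mem_Sset hγ) ha
    refine ⟨a * star γ * a⁻¹, hmem, ?_⟩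
    rw [pevP_eq_of_mem_Sset hf hmem, inv_mul_cancel_right₀ ha, hab]

lemma exists_mem_Sset_of_pevP_Np_eq_zero {f : Quat[X]} {ζ : Quat} (h : pevP (Np f) ζ = 0) :
    ∃ q ∈ Sset ζ, pevP f q = 0 := by
  rcases eq_or_ne (pevP f ζ) 0 with h0 | h0
  · exact ⟨ζ, mem_Sset_self ζ, h0⟩
  · rw [Np, pevP_mul, mul_eq_zero] at h
    have hmem := conj_mem_Sset (mem_Sset_self ζ) (inv_ne_zero h0)
    rw [inv_inv] at hmem
    exact exists_mem_Sset_of_pevP_pconj_eq_zero hmem (h.resolve_left h0)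

lemma card_filter_add_card_filter_add_two_mul_card_filter_le_sum {ι : Type*} [Fintype ι]
    (p q : ι → Prop) [DecidablePred p] [DecidablePred q] (m : ι → ℕ) (h1 : ∀ i, 1 ≤ m i)
    (h2 : ∀ i, ¬p i → q i → 2 ≤ m i) :
    (Finset.univ.filter p).card + (Finset.univ.filter fun i => ¬p i ∧ ¬q i).card +
      2 * (Finset.univ.filter fun i => ¬p i ∧ q i).card ≤ ∑ i, m i := by
  simp only [Finset.card_filter, Finset.mul_sum, ← Finset.sum_add_distrib]
  refine Finset.sum_le_sum fun i _ => ?_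
  by_cases hp : p i <;> by_cases hq : q i <;> simp [hp, hq, h1 i, h2 i]

section

variable {G : ℝ[X]} {f : Quat[X]}

lemma aeval_eq_pevP_Np (hG : G.map (algebraMap ℝ Quat) = Np f) (x : Quat) :
    aeval x G = pevP (Np f) x := by
  rw [← hG, pevP_map]

lemma Δreal_dvd_of_pevP_eq_zero (hG : G.map (algebraMap ℝ Quat) = Np f) {x α : Quat}
    (hx : x ∈ Sset α) (h : pevP f x = 0) : Δreal α ∣ G := by
  rw [← Δreal_eq_iff.mpr hx]
  refine Δreal_dvd_of_aeval_eq_zero (eval_nonneg_of_map_eq_Np hG) ?_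
  rw [aeval_eq_pevP_Np hG, Np]
  exact pevP_mul_eq_zero_of_left _ h

lemma natDegree_eq_of_map_eq_Np (hG : G.map (algebraMap ℝ Quat) = Np f) (hf : f ≠ 0) :
    G.natDegree = 2 * f.natDegree := by
  rw [← natDegree_map_eq_of_injective Quaternion.algebraMap_injective, hG, natDegree_Np hf]

lemma Δpoly_pow_dvd_Np_iff (hG : G.map (algebraMap ℝ Quat) = Np f) (α : Quat) (s : ℕ) :
    Δpoly α ^ s ∣ Np f ↔ Δreal α ^ s ∣ G := by
  rw [← hG, Δpoly_eq_map, ← Polynomial.map_pow,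
    map_dvd_map _ Quaternion.algebraMap_injective ((monic_Δreal α).pow s)]

lemma exists_pevP_eq_zero (hn : 0 < f.natDegree) : ∃ q, pevP f q = 0 := by
  obtain ⟨G, hG⟩ := (mem_lifts _).mp (Np_mem_lifts f)
  obtain ⟨x, hx⟩ := exists_aeval_quat_eq_zero
    (by rw [natDegree_eq_of_map_eq_Np hG (ne_zero_of_natDegree_gt hn)]; omega)
  obtain ⟨q, -, hq⟩ := exists_mem_Sset_of_pevP_Np_eq_zero (by rwa [← aeval_eq_pevP_Np hG])
  exact ⟨q, hq⟩

/-- `G = ∏ Δreal (α i) ^ m i * H`, and a root of `H` would lie in some class `Sset (α i)` and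
raise its multiplicity; so `H` has no quaternionic root and is constant. -/
lemma natDegree_eq_two_mul_sum {ι : Type*} [Fintype ι] (hG0 : ∀ r, 0 ≤ G.eval r)
    (hG : G ≠ 0) {α : ι → Quat} {m : ι → ℕ}
    (hdist : Pairwise fun i j => α j ∉ Sset (α i))
    (hmax : ∀ i, Δreal (α i) ^ m i ∣ G ∧ ¬Δreal (α i) ^ (m i + 1) ∣ G)
    (hroots : ∀ x : Quat, aeval x G = 0 → ∃ i, x ∈ Sset (α i)) :
    G.natDegree = 2 * ∑ i, m i := by
  obtain ⟨H, hH⟩ := Fintype.prod_dvd_of_coprime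
    (fun i j hij => (isCoprime_Δreal (hdist hij)).pow) fun i => (hmax i).1
  have hmonic : ∀ i ∈ Finset.univ, (Δreal (α i) ^ m i).Monic := fun _ _ =>
    (monic_Δreal _).pow _
  have hP : (∏ i, Δreal (α i) ^ m i).Monic := monic_prod_of_monic _ _ hmonic
  have hP0 (r : ℝ) : 0 ≤ (∏ i, Δreal (α i) ^ m i).eval r := by
    simp only [eval_prod, eval_pow]
    exact Finset.prod_nonneg fun i _ => pow_nonneg (eval_Δreal_nonneg _ r) _
  have hH0 : H ≠ 0 := by rintro rfl; exact hG (by rw [hH, mul_zero])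
  have hHdeg : H.natDegree = 0 := by
    by_contra hpos
    obtain ⟨x, hx⟩ := exists_aeval_quat_eq_zero (Nat.pos_of_ne_zero hpos)
    obtain ⟨i, hi⟩ := hroots x (by rw [hH, map_mul, hx, mul_zero])
    have hdvd : Δreal (α i) ∣ H := Δreal_eq_iff.mpr hi ▸
      Δreal_dvd_of_aeval_eq_zero (eval_nonneg_of_eval_mul_nonneg hP.ne_zero hP0 (hH ▸ hG0)) hx
    refine (hmax i).2 ?_
    rw [hH, pow_succ]
    exact mul_dvd_mul (Finset.dvd_prod_of_mem _ (Finset.mem_univ i)) hdvd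
  rw [hH, natDegree_mul hP.ne_zero hH0, hHdeg, add_zero, natDegree_prod_of_monic _ _ hmonic,
    Finset.mul_sum]
  refine Finset.sum_congr rfl fun i _ => ?_
  rw [(monic_Δreal _).natDegree_pow, natDegree_Δreal, mul_comm]

end

/-- Strong fundamental theorem of algebra for regular quaternionic polynomials: `V(f)`
is non-empty; if `α₁, …, α_k` are pairwise non-conjugate representatives of all the
conjugacy classes meeting `V(f)` and `m j` is the multiplicity of `α j` (the largest
`s` with `Δ_{α j}^s ∣ N(f)`), then `Σⱼ m j = n = deg f`; moreover, with `r`, `i`, `s`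
the numbers of real, isolated and spherical classes among them, `r + i + 2s ≤ n`. -/
theorem stmt17 (f : Quat[X]) (hn : 0 < f.natDegree) :
    (∃ q : Quat, pevP f q = 0) ∧
    ∀ (k : ℕ) (α : Fin k → Quat) (m : Fin k → ℕ),
      (∀ j j' : Fin k, j ≠ j' → α j' ∉ Sset (α j)) →
      (∀ j, ∃ x ∈ Sset (α j), pevP f x = 0) →
      (∀ q : Quat, pevP f q = 0 → ∃ j, q ∈ Sset (α j)) →
      (∀ j, Δpoly (α j) ^ (m j) ∣ Np f ∧ ¬ Δpoly (α j) ^ (m j + 1) ∣ Np f) →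
      (∑ j, m j = f.natDegree ∧
        (Finset.univ.filter fun j : Fin k => (α j).im = 0).card +
        (Finset.univ.filter fun j : Fin k =>
          (α j).im ≠ 0 ∧ ¬∀ x ∈ Sset (α j), pevP f x = 0).card +
        2 * (Finset.univ.filter fun j : Fin k =>
          (α j).im ≠ 0 ∧ ∀ x ∈ Sset (α j), pevP f x = 0).card ≤ f.natDegree) := by
  refine ⟨exists_pevP_eq_zero hn, fun k α m hdist hrep hcover hmult => ?_⟩
  have hf : f ≠ 0 := ne_zero_of_natDegree_gt hn
  obtain ⟨G, hG⟩ := (mem_lifts _).mp (Np_mem_lifts f)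
  have hmax : ∀ j, Δreal (α j) ^ m j ∣ G ∧ ¬Δreal (α j) ^ (m j + 1) ∣ G := fun j => by
    simpa only [Δpoly_pow_dvd_Np_iff hG] using hmult j
  have hroots : ∀ x : Quat, aeval x G = 0 → ∃ j, x ∈ Sset (α j) := fun x hx => by
    obtain ⟨q, hq, hq0⟩ := exists_mem_Sset_of_pevP_Np_eq_zero (by rwa [← aeval_eq_pevP_Np hG])
    obtain ⟨j, hj⟩ := hcover q hq0
    exact ⟨j, Δreal_eq_iff.mp ((Δreal_eq_iff.mpr hq).symm.trans (Δreal_eq_iff.mpr hj))⟩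
  have hGdeg := natDegree_eq_of_map_eq_Np hG hf
  have hsum : ∑ j, m j = f.natDegree := by
    have := natDegree_eq_two_mul_sum (eval_nonneg_of_map_eq_Np hG)
      (ne_zero_of_natDegree_gt (n := 0) (by omega)) hdist hmax hroots
    omega
  refine ⟨hsum, hsum ▸ card_filter_add_card_filter_add_two_mul_card_filter_le_sum _ _ m
    (fun j => ?_) (fun j hj hsph => ?_)⟩
  · obtain ⟨x, hx, hx0⟩ := hrep j
    refine Nat.one_le_iff_ne_zero.mpr fun h0 => (hmax j).2 ?_
    rw [h0, zero_add, pow_one]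
    exact Δreal_dvd_of_pevP_eq_zero hG hx hx0
  · by_contra! h
    exact (hmult j).2 (dvd_trans (pow_dvd_pow _ h) (Δpoly_sq_dvd_Np hj hsph))
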